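/- For α > 1 irrational and H = N₀ ∪ Q>α, the minimum of the set of distances Δ(H) is 1, and for every ε > 0 with ᾱ + 2ε < 1 and 2ᾱ + 2ε ≠ 1 (where ᾱ = α − ⌊α⌋), the element 2(α+ε) has set of lengths exactly {2, ⌊α⌋ + 1}. -/

import Mathlib

/-- The Puiseux monoid H = ℕ₀ ∪ ℚ>α for a real number α > 1. -/
def Halpha (α : ℝ) (hα : 1 < α) : AddSubmonoid ℚ where
  carrier := {q : ℚ | (∃ n : ℕ, q = (n : ℚ)) ∨ α < (q : ℝ)}
  zero_mem' := Or.inl ⟨0, by norm_num⟩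
  add_mem' := by
    rintro x y (⟨n, rfl⟩ | hx) (⟨m, rfl⟩ | hy)
    · exact Or.inl ⟨n + m, by push_cast; ring⟩
    · right; push_cast
      have : (0 : ℝ) ≤ (n : ℝ) := Nat.cast_nonneg n
      linarith
    · right; push_cast
      have : (0 : ℝ) ≤ (m : ℝ) := Nat.cast_nonneg m
      linarith
    · right; push_cast; linarith

/-- An element of a Puiseux monoid is an atom if it is nonzero and not the sum
of two nonzero elements. -/
def PuiseuxAtom (H : AddSubmonoid ℚ) (u : ℚ) : Prop :=
  u ∈ H ∧ u ≠ 0 ∧ ¬∃ x ∈ H, ∃ y ∈ H, x ≠ 0 ∧ y ≠ 0 ∧ u = x + y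

/-- Set of lengths of an element of a Puiseux monoid. -/
def PuiseuxL (H : AddSubmonoid ℚ) (a : ℚ) : Set ℕ :=
  {k : ℕ | ∃ f : Fin k → ℚ, (∀ i, PuiseuxAtom H (f i)) ∧ a = ∑ i, f i}

/-- The set of distances Δ(H) of a Puiseux monoid: the successive differences
occurring in sets of lengths. -/
def PuiseuxDelta (H : AddSubmonoid ℚ) : Set ℕ :=
  {d : ℕ | 0 < d ∧ ∃ a ∈ H, ∃ k : ℕ, k ∈ PuiseuxL H a ∧ k + d ∈ PuiseuxL H a ∧
    ∀ j : ℕ, k < j → j < k + d → j ∉ PuiseuxL H a}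


/-!
The atoms of `H` are `1` and the non-integers in `(α, α + 1]`. Hence a factorization of
length `k` of `a` containing `t` atoms other than `1` gives `(k - t) + t α ≤ a ≤ k + t α`. For
`a = 2(α + ε)` these bounds leave only `t = 2, k = 2` and `t = 1, k = ⌊α⌋ + 1` (`t = 0` would
make `2ᾱ + 2ε` an integer in `(0, 2)`), realized by `q + q` and `(2q - ⌊α⌋) + 1 + ⋯ + 1`.
The distance `1` comes from `u + u = 1 + v + v` with
`v = u - 1/2`, where `u` is chosen so that `2u` is not an integer.
-/

lemma natCast_ne_intCast_add {m : ℤ} {r : ℝ} (h₀ : 0 < r) (h₂ : r < 2) (h₁ : r ≠ 1) (n : ℕ) :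
    (n : ℝ) ≠ m + r := by
  intro h
  have hr : r = ((n - m : ℤ) : ℝ) := by push_cast; linarith
  have hpos : 0 < n - m := by exact_mod_cast hr ▸ h₀
  have hlt : n - m < 2 := by exact_mod_cast hr ▸ h₂
  exact h₁ (by rw [hr, show (n : ℤ) - m = 1 by omega, Int.cast_one])

lemma exists_le_sum_le_of_forall_eq_one_or_mem_Icc {ι : Type*} [Fintype ι] {α : ℝ}
    {x : ι → ℝ} (hx : ∀ i, x i = 1 ∨ x i ∈ Set.Icc α (α + 1)) :
    ∃ t ≤ Fintype.card ι, (Fintype.card ι - t : ℝ) + t * α ≤ ∑ i, x i ∧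
      ∑ i, x i ≤ Fintype.card ι + t * α := by
  classical
  let c : ι → ℕ := fun i => if x i = 1 then 0 else 1
  have hc : ∀ i, 1 + c i * (α - 1) ≤ x i ∧ x i ≤ 1 + c i * α := by
    intro i
    rcases hx i with h | ⟨hlo, hhi⟩
    · simp [c, h]
    · by_cases h : x i = 1
      · simp [c, h]
      · simp only [c, h, if_false, Nat.cast_one, one_mul]
        constructor <;> linarith
  have hsum_lo := Finset.sum_le_sum fun i (_ : i ∈ Finset.univ) => (hc i).1
  have hsum_hi := Finset.sum_le_sum fun i (_ : i ∈ Finset.univ) => (hc i).2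
  simp only [Finset.sum_add_distrib, ← Finset.sum_mul, Finset.sum_const, Finset.card_univ,
    nsmul_eq_mul, mul_one, ← Nat.cast_sum] at hsum_lo hsum_hi
  refine ⟨∑ i, c i, ?_, by linarith, by linarith⟩
  calc ∑ i, c i ≤ ∑ _i : ι, 1 := Finset.sum_le_sum fun i _ => by simp only [c]; split_ifs <;> simp
    _ = Fintype.card ι := by simp

section Lengths

variable {H : AddSubmonoid ℚ}

lemma zero_mem_puiseuxL_zero : 0 ∈ PuiseuxL H 0 :=
  ⟨Fin.elim0, fun i => i.elim0, by simp⟩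

lemma one_mem_puiseuxL_of_puiseuxAtom {u : ℚ} (hu : PuiseuxAtom H u) : 1 ∈ PuiseuxL H u :=
  ⟨fun _ => u, fun _ => hu, by simp⟩

lemma add_mem_puiseuxL {a b : ℚ} {k l : ℕ} (ha : k ∈ PuiseuxL H a) (hb : l ∈ PuiseuxL H b) :
    k + l ∈ PuiseuxL H (a + b) := by
  obtain ⟨f, hf, rfl⟩ := ha
  obtain ⟨g, hg, rfl⟩ := hb
  refine ⟨Fin.append f g, Fin.addCases (by simpa using hf) (by simpa using hg), ?_⟩
  simp [Fin.sum_univ_add]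

lemma two_mem_puiseuxL_two_mul {u : ℚ} (hu : PuiseuxAtom H u) : 2 ∈ PuiseuxL H (2 * u) := by
  simpa [two_mul] using add_mem_puiseuxL (one_mem_puiseuxL_of_puiseuxAtom hu)
    (one_mem_puiseuxL_of_puiseuxAtom hu)

lemma natCast_mem_puiseuxL_natCast (h₁ : PuiseuxAtom H 1) (n : ℕ) : n ∈ PuiseuxL H n := by
  induction n with
  | zero => simpa using zero_mem_puiseuxL_zero
  | succ n ih => simpa using add_mem_puiseuxL ih (one_mem_puiseuxL_of_puiseuxAtom h₁)

end Lengths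

section Halpha

variable {α : ℝ} {hα : 1 < α}

lemma one_le_of_mem_Halpha {q : ℚ} (hq : q ∈ Halpha α hα) (h₀ : q ≠ 0) : (1 : ℝ) ≤ q := by
  rcases hq with ⟨n, rfl⟩ | h
  · exact_mod_cast Nat.one_le_iff_ne_zero.mpr (by rintro rfl; exact h₀ Nat.cast_zero)
  · linarith

lemma one_mem_Halpha : (1 : ℚ) ∈ Halpha α hα := Or.inl ⟨1, Nat.cast_one.symm⟩

lemma puiseuxAtom_Halpha_one : PuiseuxAtom (Halpha α hα) 1 := by
  refine ⟨one_mem_Halpha, one_ne_zero, ?_⟩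
  rintro ⟨x, hx, y, hy, hx₀, hy₀, hxy⟩
  have := one_le_of_mem_Halpha hx hx₀
  have := one_le_of_mem_Halpha hy hy₀
  have : (1 : ℝ) = x + y := by exact_mod_cast hxy
  linarith

lemma puiseuxAtom_Halpha {u : ℚ} (h₁ : α < u) (h₂ : (u : ℝ) ≤ α + 1)
    (hnat : ∀ n : ℕ, (n : ℝ) ≠ u) : PuiseuxAtom (Halpha α hα) u := by
  refine ⟨Or.inr h₁, fun h => by simp [h] at h₁; linarith, ?_⟩
  rintro ⟨x, hx, y, hy, hx₀, hy₀, rfl⟩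
  have := one_le_of_mem_Halpha hx hx₀
  have := one_le_of_mem_Halpha hy hy₀
  push_cast at h₁ h₂
  rcases hx with ⟨n, rfl⟩ | hx
  · rcases hy with ⟨m, rfl⟩ | hy
    · exact hnat (n + m) (by push_cast; ring)
    · linarith
  · linarith

lemma eq_one_or_mem_Ioc_of_puiseuxAtom_Halpha {u : ℚ} (hu : PuiseuxAtom (Halpha α hα) u) :
    u = 1 ∨ (u : ℝ) ∈ Set.Ioc α (α + 1) := by
  obtain ⟨hmem, hu₀, hirred⟩ := hu
  by_contra! ⟨hu₁, hIoc⟩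
  refine hirred ⟨1, one_mem_Halpha, u - 1, ?_, one_ne_zero, sub_ne_zero.mpr hu₁, by ring⟩
  rcases hmem with ⟨n, rfl⟩ | hα'
  · have : n ≠ 0 := by rintro rfl; exact hu₀ Nat.cast_zero
    have : n ≠ 1 := by rintro rfl; exact hu₁ Nat.cast_one
    exact Or.inl ⟨n - 1, by push_cast [Nat.cast_sub (by omega : 1 ≤ n)]; ring⟩
  · have : α + 1 < u := by
      by_contra! h
      exact hIoc ⟨hα', h⟩
    exact Or.inr (by push_cast; linarith)

lemma exists_le_of_mem_puiseuxL_Halpha {a : ℚ} {k : ℕ} (hk : k ∈ PuiseuxL (Halpha α hα) a) :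
    ∃ t ≤ k, (k - t : ℝ) + t * α ≤ a ∧ (a : ℝ) ≤ k + t * α := by
  obtain ⟨f, hf, rfl⟩ := hk
  have hx : ∀ i, (f i : ℝ) = 1 ∨ (f i : ℝ) ∈ Set.Icc α (α + 1) := fun i =>
    (eq_one_or_mem_Ioc_of_puiseuxAtom_Halpha (hf i)).imp (by simp +contextual)
      (Set.Ioc_subset_Icc_self ·)
  simpa using exists_le_sum_le_of_forall_eq_one_or_mem_Icc hx

end Halpha

lemma eq_two_or_eq_floor_add_one {α ε : ℝ} {k t : ℕ} (hα : 1 ≤ α) (hε : 0 < ε)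
    (h₁ : Int.fract α + 2 * ε < 1) (h₂ : 2 * Int.fract α + 2 * ε ≠ 1) (htk : t ≤ k)
    (hlo : (k - t : ℝ) + t * α ≤ 2 * (α + ε)) (hhi : 2 * (α + ε) ≤ k + t * α) :
    k = 2 ∨ k = ⌊α⌋.toNat + 1 := by
  have hfl : (⌊α⌋ : ℝ) + Int.fract α = α := Int.floor_add_fract α
  have := Int.fract_nonneg α
  have : 0 ≤ ⌊α⌋ := Int.floor_nonneg.mpr (by linarith)
  have htk' : (t : ℝ) ≤ k := by exact_mod_cast htk
  have ht : t < 3 := by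
    by_contra! ht
    have : (3 : ℝ) ≤ t := by exact_mod_cast ht
    nlinarith
  interval_cases t <;> norm_num at hlo hhi
  · refine absurd ?_ (natCast_ne_intCast_add (m := 2 * ⌊α⌋) (by linarith) (by linarith) h₂ k)
    push_cast
    linarith
  · have hk₁ : (k : ℝ) < ⌊α⌋ + 2 := by linarith
    have hk₂ : (⌊α⌋ : ℝ) < k := by linarith
    have : (k : ℤ) < ⌊α⌋ + 2 := by exact_mod_cast hk₁
    have : ⌊α⌋ < k := by exact_mod_cast hk₂
    omega
  · have : (k : ℝ) < 3 := by linarith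
    have : k < 3 := by exact_mod_cast this
    omega

section TwoMul

variable {α ε : ℝ} (hα : 1 < α) (hε : 0 < ε) (h₁ : Int.fract α + 2 * ε < 1) {q : ℚ}
  (hq : (q : ℝ) = α + ε)
include hα hε h₁ hq

lemma puiseuxL_Halpha_two_mul_subset (h₂ : 2 * Int.fract α + 2 * ε ≠ 1) :
    PuiseuxL (Halpha α hα) (2 * q) ⊆ {2, ⌊α⌋.toNat + 1} := by
  intro k hk
  obtain ⟨t, htk, hlo, hhi⟩ := exists_le_of_mem_puiseuxL_Halpha hk
  push_cast at hlo hhi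
  rw [hq] at hlo hhi
  exact eq_two_or_eq_floor_add_one hα.le hε h₁ h₂ htk hlo hhi

lemma puiseuxL_Halpha_two_mul_supset (h₂ : 2 * Int.fract α + 2 * ε ≠ 1) :
    {2, ⌊α⌋.toNat + 1} ⊆ PuiseuxL (Halpha α hα) (2 * q) := by
  have hfl : (⌊α⌋ : ℝ) + Int.fract α = α := Int.floor_add_fract α
  have := Int.fract_nonneg α
  have hfl₀ : 0 ≤ ⌊α⌋ := Int.floor_nonneg.mpr (by linarith)
  rintro k (rfl | rfl)
  · refine two_mem_puiseuxL_two_mul (puiseuxAtom_Halpha (by linarith) (by linarith) fun n => ?_)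
    rw [hq, ← hfl, add_assoc]
    exact natCast_ne_intCast_add (by linarith) (by linarith) (by linarith) n
  · set u : ℚ := 2 * q - ⌊α⌋.toNat
    have hu : (u : ℝ) = ⌊α⌋ + (2 * Int.fract α + 2 * ε) := by
      simp only [u, Rat.cast_sub, Rat.cast_mul, Rat.cast_ofNat, Rat.cast_natCast, hq]
      rw [show ((⌊α⌋.toNat : ℕ) : ℝ) = (⌊α⌋ : ℝ) by exact_mod_cast Int.toNat_of_nonneg hfl₀]
      linarith
    have hu_atom : PuiseuxAtom (Halpha α hα) u := puiseuxAtom_Halpha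
      (by rw [hu]; linarith) (by rw [hu]; linarith) fun n => hu ▸ natCast_ne_intCast_add
        (by linarith) (by linarith) h₂ n
    simpa [u, add_comm] using add_mem_puiseuxL (natCast_mem_puiseuxL_natCast
      puiseuxAtom_Halpha_one ⌊α⌋.toNat) (one_mem_puiseuxL_of_puiseuxAtom hu_atom)

end TwoMul

lemma one_mem_puiseuxDelta_Halpha {α : ℝ} (hα : 1 < α) : 1 ∈ PuiseuxDelta (Halpha α hα) := by
  set c := ⌈2 * α + 1⌉
  have hc₁ : 2 * α + 1 ≤ c := Int.le_ceil _
  have hc₂ : (c : ℝ) < 2 * α + 2 := by linarith [Int.ceil_lt_add_one (2 * α + 1)]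
  obtain ⟨u, hu₁, hu₂⟩ := exists_rat_btwn (show (c : ℝ) / 2 < α + 1 by linarith)
  have h2u : ∀ n : ℕ, (n : ℝ) ≠ 2 * u := fun n => by
    rw [show (2 * u : ℝ) = c + (2 * u - c) by ring]
    exact natCast_ne_intCast_add (by linarith) (by linarith) (by linarith) n
  have hu : PuiseuxAtom (Halpha α hα) u := puiseuxAtom_Halpha (by linarith) hu₂.le
    fun n hn => h2u (2 * n) (by push_cast; rw [hn])
  have hv : PuiseuxAtom (Halpha α hα) (u - 1 / 2) := puiseuxAtom_Halpha
    (by push_cast; linarith) (by push_cast; linarith)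
    fun n hn => h2u (2 * n + 1) (by push_cast at hn ⊢; linarith)
  refine ⟨one_pos, 2 * u, Or.inr (by push_cast; linarith), 2, two_mem_puiseuxL_two_mul hu,
    ?_, fun j _ _ => by omega⟩
  convert add_mem_puiseuxL (one_mem_puiseuxL_of_puiseuxAtom puiseuxAtom_Halpha_one)
    (two_mem_puiseuxL_two_mul hv) using 2
  ring

theorem Halpha_min_delta_and_lengths_general (α : ℝ) (hα : 1 < α) :
    IsLeast (PuiseuxDelta (Halpha α hα)) 1 ∧
    ∀ ε : ℝ, 0 < ε → Int.fract α + 2 * ε < 1 → 2 * Int.fract α + 2 * ε ≠ 1 →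
      ∀ q : ℚ, (q : ℝ) = α + ε →
        PuiseuxL (Halpha α hα) (2 * q) = {2, ⌊α⌋.toNat + 1} :=
  ⟨⟨one_mem_puiseuxDelta_Halpha hα, fun _ hd => hd.1⟩, fun _ hε h₁ h₂ _ hq =>
    (puiseuxL_Halpha_two_mul_subset hα hε h₁ hq h₂).antisymm
      (puiseuxL_Halpha_two_mul_supset hα hε h₁ hq h₂)⟩

/-- For α > 1 irrational and H = ℕ₀ ∪ ℚ>α: min Δ(H) = 1, and for ε > 0 with
ᾱ + 2ε < 1 and 2ᾱ + 2ε ≠ 1 (ᾱ = α − ⌊α⌋), the element 2(α+ε) of H has set of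
lengths exactly {2, ⌊α⌋ + 1}. -/
theorem Halpha_min_delta_and_lengths (α : ℝ) (hα : 1 < α) (hirr : Irrational α) :
    IsLeast (PuiseuxDelta (Halpha α hα)) 1 ∧
    ∀ ε : ℝ, 0 < ε → Int.fract α + 2 * ε < 1 → 2 * Int.fract α + 2 * ε ≠ 1 →
      ∀ q : ℚ, (q : ℝ) = α + ε →
        PuiseuxL (Halpha α hα) (2 * q) = {2, ⌊α⌋.toNat + 1} :=
  Halpha_min_delta_and_lengths_general α hα
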